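/- arXiv:2508.15154 — 4 statements merged into one kernel-verified Lean document; each statement's English description precedes it below -/
import Mathlib

section
/- Let Γ be a group and let μ be a Borel probability measure on Γ → Bool (product topology, Bool discrete) such that μ(S(Γ)) = 1, i.e. μ-almost every f is the indicator of a subgroup of Γ. Define τ_μ : Γ → ℝ by τ_μ(g) = μ {f : Γ → Bool | f g = true}. Then τ_μ(1) = 1 and τ_μ is positive definite: for every n, every g : Fin n → Γ and c : Fin n → ℂ, the complex number ∑ i, ∑ j, conj(c i) * (c j) * τ_μ((g i)⁻¹ * g j) has zero imaginary part and nonnegative real part. -/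
open MeasureTheory
open scoped ComplexConjugate

/-- `S(Γ)`: the set of indicator functions of subgroups of `Γ` inside `Γ → Bool`. -/
def subgroupIndicators (Γ : Type*) [Group Γ] : Set (Γ → Bool) :=
  {f | ∃ K : Subgroup Γ, ∀ g : Γ, f g = true ↔ g ∈ K}

/-!
Averaging over `μ` turns `τ_μ` into the expectation of the trace `g ↦ 𝟙[g ∈ H]` of the random
subgroup `H`. For a fixed subgroup `K`, the kernel `𝟙[(g i)⁻¹ * g j ∈ K]` equals `𝟙[g i K = g j K]`,
so its quadratic form is `∑ |∑_{g i ∈ C} c i|²` over the cosets `C` of `K`, hence nonnegative; and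
an average of positive semidefinite kernels is positive semidefinite. Measurability of the event
"`f` is a subgroup indicator" comes from `S(Γ)` being closed in the product topology.
-/

open Finset
open scoped ComplexOrder

section Topology

lemma isClosed_setOf_apply_eq_true {α : Type*} (a : α) :
    IsClosed {f : α → Bool | f a = true} :=
  isClosed_eq (continuous_apply a) continuous_const

variable {Γ : Type*} [Group Γ]

lemma mem_subgroupIndicators_iff {f : Γ → Bool} :
    f ∈ subgroupIndicators Γ ↔
      f 1 = true ∧ ∀ x y, f x = true → f y = true → f (x * y⁻¹) = true := by
  constructor
  · rintro ⟨K, hK⟩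
    simp only [hK]
    exact ⟨K.one_mem, fun x y hx hy => K.mul_mem hx (K.inv_mem hy)⟩
  · rintro ⟨h1, hdiv⟩
    exact ⟨Subgroup.ofDiv {x | f x = true} ⟨1, h1⟩ fun x hx y hy => hdiv x y hx hy,
      fun _ => Iff.rfl⟩

lemma isClosed_subgroupIndicators : IsClosed (subgroupIndicators Γ) := by
  have h : subgroupIndicators Γ = {f | f 1 = true} ∩
      ⋂ x, ⋂ y, {f | f x = true → f y = true → f (x * y⁻¹) = true} := by
    ext f
    simp [mem_subgroupIndicators_iff]
  rw [h]
  refine (isClosed_setOf_apply_eq_true 1).inter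
    (isClosed_iInter fun x => isClosed_iInter fun y => ?_)
  have hcont : Continuous fun f : Γ → Bool => (f x, f y, f (x * y⁻¹)) := by fun_prop
  exact (isClosed_discrete
    {p : Bool × Bool × Bool | p.1 = true → p.2.1 = true → p.2.2 = true}).preimage hcont

end Topology

lemma sum_conj_mul_ite_eq_nonneg {ι α : Type*} [Fintype ι] [DecidableEq α] (e : ι → α)
    (c : ι → ℂ) : 0 ≤ ∑ i, ∑ j, conj (c i) * c j * (if e i = e j then 1 else 0) := by
  let d (z : α) : ℂ := ∑ i with e i = z, c i
  have h : ∑ i, ∑ j, conj (c i) * c j * (if e i = e j then 1 else 0) =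
      ∑ z ∈ univ.image e, conj (d z) * d z := by
    rw [← sum_fiberwise_of_maps_to (g := e) (t := univ.image e)
      (fun i _ => mem_image_of_mem e (mem_univ i))]
    refine sum_congr rfl fun z _ => ?_
    rw [map_sum, sum_mul]
    refine sum_congr rfl fun i hi => ?_
    rw [(mem_filter.1 hi).2, mul_sum, sum_filter]
    refine sum_congr rfl fun j _ => ?_
    simp only [eq_comm (a := z), mul_ite, mul_one, mul_zero]
  rw [h]
  exact sum_nonneg fun z _ => star_mul_self_nonneg (d z)

lemma sum_conj_mul_subgroupIndicator_nonneg {Γ ι : Type*} [Group Γ] [Fintype ι]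
    {f : Γ → Bool} (hf : f ∈ subgroupIndicators Γ) (g : ι → Γ) (c : ι → ℂ) :
    0 ≤ ∑ i, ∑ j, conj (c i) * c j * (if f ((g i)⁻¹ * g j) = true then 1 else 0) := by
  classical
  obtain ⟨K, hK⟩ := hf
  have hcoset (i j : ι) : f ((g i)⁻¹ * g j) = true ↔ (g i : Γ ⧸ K) = g j :=
    (hK _).trans QuotientGroup.eq.symm
  simp_rw [hcoset]
  exact sum_conj_mul_ite_eq_nonneg _ c

lemma sum_conj_mul_integral_nonneg {Ω ι : Type*} [MeasurableSpace Ω] [Fintype ι]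
    {μ : Measure Ω} (k : Ω → ι → ι → ℝ) (hk : ∀ i j, Integrable (fun ω => k ω i j) μ)
    (c : ι → ℂ) (hpos : ∀ᵐ ω ∂μ, 0 ≤ ∑ i, ∑ j, conj (c i) * c j * (k ω i j : ℂ)) :
    0 ≤ ∑ i, ∑ j, conj (c i) * c j * ((∫ ω, k ω i j ∂μ : ℝ) : ℂ) := by
  have hk' (i j : ι) : Integrable (fun ω => conj (c i) * c j * (k ω i j : ℂ)) μ :=
    ((hk i j).ofReal).const_mul _
  have h : ∑ i, ∑ j, conj (c i) * c j * ((∫ ω, k ω i j ∂μ : ℝ) : ℂ) =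
      ∫ ω, ∑ i, ∑ j, conj (c i) * c j * (k ω i j : ℂ) ∂μ := by
    rw [integral_finsetSum _ fun i _ => integrable_finsetSum _ fun j _ => hk' i j]
    refine sum_congr rfl fun i _ => ?_
    rw [integral_finsetSum _ fun j _ => hk' i j]
    refine sum_congr rfl fun j _ => ?_
    rw [integral_const_mul, integral_complex_ofReal]
  exact h ▸ integral_nonneg_of_ae hpos

/-- If `μ` is a Borel probability measure on `Γ → Bool` concentrated on indicator functions
of subgroups (a random subgroup), then `τ_μ(g) := μ {f | f g}` satisfies `τ_μ(1) = 1` and is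
positive definite. -/
theorem randomSubgroup_trace_posDef {Γ : Type*} [Group Γ]
    [MeasurableSpace (Γ → Bool)] [BorelSpace (Γ → Bool)]
    (μ : Measure (Γ → Bool)) [IsProbabilityMeasure μ]
    (hμ : μ (subgroupIndicators Γ) = 1)
    (τ : Γ → ℝ) (hτ : ∀ g : Γ, τ g = (μ {f : Γ → Bool | f g = true}).toReal) :
    τ 1 = 1 ∧
    ∀ (n : ℕ) (g : Fin n → Γ) (c : Fin n → ℂ),
      (∑ i, ∑ j, conj (c i) * c j * ((τ ((g i)⁻¹ * g j) : ℝ) : ℂ)).im = 0 ∧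
      0 ≤ (∑ i, ∑ j, conj (c i) * c j * ((τ ((g i)⁻¹ * g j) : ℝ) : ℂ)).re := by
  have hS : ∀ᵐ f ∂μ, f ∈ subgroupIndicators Γ :=
    (ae_mem_iff_measure_eq isClosed_subgroupIndicators.measurableSet.nullMeasurableSet).2
      (by rw [hμ, measure_univ])
  have hE (x : Γ) : MeasurableSet {f : Γ → Bool | f x = true} :=
    (isClosed_setOf_apply_eq_true x).measurableSet
  refine ⟨?_, fun n g c => ?_⟩
  · have h1 : μ {f : Γ → Bool | f 1 = true} = 1 :=
      le_antisymm prob_le_one <| hμ ▸ measure_mono fun f hf =>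
        (mem_subgroupIndicators_iff.1 hf).1
    rw [hτ, h1, ENNReal.toReal_one]
  · let k (f : Γ → Bool) (i j : Fin n) : ℝ := {f | f ((g i)⁻¹ * g j) = true}.indicator 1 f
    have hk (i j : Fin n) : ∫ f, k f i j ∂μ = τ ((g i)⁻¹ * g j) := by
      rw [integral_indicator_one (hE _), hτ, measureReal_def]
    have hpos := sum_conj_mul_integral_nonneg k
      (fun i j => (integrable_const 1).indicator (hE _)) c <| by
        filter_upwards [hS] with f hf
        simpa [k, Set.indicator_apply, apply_ite (fun x : ℝ => (x : ℂ))] using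
          sum_conj_mul_subgroupIndicator_nonneg hf g c
    simp_rw [hk] at hpos
    exact ⟨(Complex.nonneg_iff.1 hpos).2.symm, (Complex.nonneg_iff.1 hpos).1⟩
end

section
/- Let n ≥ 1 and let A be an n × n matrix with integer entries. Let B = (A.map (Int.cast : ℤ → ℝ))ᵀ * (A.map Int.cast), a real symmetric positive semidefinite matrix, and let λ_1, …, λ_n be its eigenvalues (listed with multiplicity, via the Hermitian spectral theorem). Then ∑ i, Real.log (λ i) ≥ 0; equivalently, the product of the nonzero eigenvalues of B is at least 1. (This is the core computation showing that finitely described invariant random subgroups, and hence co-sofic IRSs, satisfy Lück's determinant conjecture.) -/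
/-!
The characteristic polynomial of `B = AᵀA` has integer coefficients, and over `ℝ` it splits as
`∏ i, (X - λ i)`. Its trailing (lowest nonzero) coefficient is therefore on one hand
`∏_{λ i ≠ 0} (-λ i)`, on the other hand a nonzero integer, so the product of the nonzero
eigenvalues, which is positive as `B` is positive semidefinite, is at least `1`.
-/

open Matrix
open scoped ComplexOrder

namespace Polynomial

variable {R : Type*}

theorem trailingCoeff_map_of_injective {S : Type*} [Semiring R] [Semiring S] {f : R →+* S}
    (hf : Function.Injective f) (p : R[X]) : (p.map f).trailingCoeff = f p.trailingCoeff := by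
  simp only [trailingCoeff, natTrailingDegree, trailingDegree, support_map_of_injective p hf,
    coeff_map]

theorem trailingCoeff_prod [CommSemiring R] [NoZeroDivisors R] {ι : Type*} (s : Finset ι)
    (p : ι → R[X]) : (∏ i ∈ s, p i).trailingCoeff = ∏ i ∈ s, (p i).trailingCoeff := by
  induction s using Finset.cons_induction with
  | empty => simp [trailingCoeff]
  | cons a s ha ih => rw [Finset.prod_cons, Finset.prod_cons, trailingCoeff_mul, ih]

theorem trailingCoeff_X_sub_C [Ring R] [Nontrivial R] [DecidableEq R] (a : R) :
    (X - C a).trailingCoeff = if a = 0 then 1 else -a := by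
  split_ifs with ha
  · simp [ha, trailingCoeff]
  · rw [trailingCoeff_eq_coeff_zero] <;> simp [ha]

theorem trailingCoeff_prod_X_sub_C [CommRing R] [IsDomain R] [DecidableEq R] {ι : Type*} (s : Finset ι)
    (a : ι → R) : (∏ i ∈ s, (X - C (a i))).trailingCoeff = ∏ i ∈ s with a i ≠ 0, -a i := by
  simp only [trailingCoeff_prod, trailingCoeff_X_sub_C, Finset.prod_ite, Finset.prod_const_one,
    one_mul]

end Polynomial

theorem Real.sum_log_eq_log_prod_filter_ne_zero {ι : Type*} (s : Finset ι) (f : ι → ℝ) :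
    ∑ i ∈ s, Real.log (f i) = Real.log (∏ i ∈ s with f i ≠ 0, f i) := by
  rw [Real.log_prod fun i hi => (Finset.mem_filter.mp hi).2]
  exact (Finset.sum_filter_of_ne (p := fun i => f i ≠ 0) fun i _ hlog hfi =>
    hlog (by rw [hfi, Real.log_zero])).symm

namespace Matrix.IsHermitian

variable {𝕜 n : Type*} [RCLike 𝕜] [Fintype n] [DecidableEq n] {A : Matrix n n 𝕜}
  (hA : A.IsHermitian)

theorem trailingCoeff_charpoly :
    A.charpoly.trailingCoeff = ((∏ i with hA.eigenvalues i ≠ 0, -hA.eigenvalues i : ℝ) : 𝕜) := by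
  classical
  rw [hA.charpoly_eq, Polynomial.trailingCoeff_prod_X_sub_C]
  push_cast
  simp only [ne_eq, RCLike.ofReal_eq_zero]

theorem one_le_abs_prod_eigenvalues_ne_zero {M : Matrix n n ℤ} (hM : M.map (↑) = A) :
    1 ≤ |∏ i with hA.eigenvalues i ≠ 0, hA.eigenvalues i| := by
  set c := M.charpoly.trailingCoeff
  have hc : c ≠ 0 := Polynomial.trailingCoeff_nonzero_iff_nonzero.mpr M.charpoly_monic.ne_zero
  have hcast : ((∏ i with hA.eigenvalues i ≠ 0, -hA.eigenvalues i : ℝ) : 𝕜) = ((c : ℝ) : 𝕜) := by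
    have hM' : M.map (Int.castRingHom 𝕜) = A := hM
    rw [← hA.trailingCoeff_charpoly, ← hM', charpoly_map,
      Polynomial.trailingCoeff_map_of_injective (RingHom.injective_int _)]
    simp [c]
  rw [RCLike.ofReal_inj, Finset.prod_neg] at hcast
  calc (1 : ℝ) ≤ |(c : ℝ)| := by exact_mod_cast Int.one_le_abs hc
    _ = _ := by rw [← hcast, abs_mul, abs_pow, abs_neg, abs_one, one_pow, one_mul]

theorem prod_eigenvalues_ne_zero_pos (hpsd : A.PosSemidef) :
    0 < ∏ i with hA.eigenvalues i ≠ 0, hA.eigenvalues i :=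
  Finset.prod_pos fun i hi =>
    (hpsd.eigenvalues_nonneg i).lt_of_ne' (Finset.mem_filter.mp hi).2

end Matrix.IsHermitian

theorem intMatrix_detConjecture_general {n : ℕ} (A : Matrix (Fin n) (Fin n) ℤ)
    (hB : ((A.map (Int.cast : ℤ → ℝ))ᵀ * A.map (Int.cast : ℤ → ℝ)).IsHermitian) :
    0 ≤ ∑ i, Real.log (hB.eigenvalues i) ∧
    1 ≤ ∏ i ∈ Finset.univ.filter (fun i => hB.eigenvalues i ≠ 0), hB.eigenvalues i := by
  have hAtA : (Aᵀ * A).map (Int.cast : ℤ → ℝ) = (A.map Int.cast)ᵀ * A.map Int.cast := by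
    rw [← transpose_map]
    exact Matrix.map_mul (f := Int.castRingHom ℝ)
  have hpsd : ((A.map (Int.cast : ℤ → ℝ))ᵀ * A.map (Int.cast : ℤ → ℝ)).PosSemidef := by
    simpa using posSemidef_conjTranspose_mul_self (A.map (Int.cast : ℤ → ℝ))
  have h1 : 1 ≤ ∏ i with hB.eigenvalues i ≠ 0, hB.eigenvalues i := by
    rw [← abs_of_pos (hB.prod_eigenvalues_ne_zero_pos hpsd)]
    exact hB.one_le_abs_prod_eigenvalues_ne_zero hAtA
  exact ⟨Real.sum_log_eq_log_prod_filter_ne_zero _ _ ▸ Real.log_nonneg h1, h1⟩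

/-- For an integer matrix `A`, the sum of the logs of the eigenvalues of `B = AᵀA`
(over ℝ, with `Real.log 0 = 0`) is nonnegative; equivalently, the product of the nonzero
eigenvalues of `B` is at least `1`. -/
theorem intMatrix_detConjecture {n : ℕ} (hn : 1 ≤ n) (A : Matrix (Fin n) (Fin n) ℤ)
    (hB : ((A.map (Int.cast : ℤ → ℝ))ᵀ * A.map (Int.cast : ℤ → ℝ)).IsHermitian) :
    0 ≤ ∑ i, Real.log (hB.eigenvalues i) ∧
    1 ≤ ∏ i ∈ Finset.univ.filter (fun i => hB.eigenvalues i ≠ 0), hB.eigenvalues i :=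
  intMatrix_detConjecture_general A hB
end

section
/- There exists a family of polynomials g : ℕ → ℕ → Polynomial ℚ such that: (i) for every N ∈ ℕ and every x ∈ [0, N], the sequence n ↦ eval x ((g n N).map (algebraMap ℚ ℝ)) converges to Real.log x as n → ∞ (recall Real.log 0 = 0, so the limit is ln₊ x); and (ii) for all n, N, N' ∈ ℕ and all x ∈ [0, min N N'], eval x ((g n N).map (algebraMap ℚ ℝ)) ≥ eval x ((g (n+1) N').map (algebraMap ℚ ℝ)). -/
open Polynomial Filter

/-- auxiliary sequence tending to zero -/
noncomputable def pe (n : ℕ) : ℝ := 1 / (n + 1)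

lemma pe_pos (n : ℕ) : 0 < pe n := by
  unfold pe; positivity

lemma pe_le_one (n : ℕ) : pe n ≤ 1 := by
  unfold pe
  rw [div_le_one (by positivity)]
  linarith [Nat.cast_nonneg (α := ℝ) n]

lemma pe_strict_anti (n : ℕ) : pe (n + 1) < pe n := by
  unfold pe
  apply div_lt_div_of_pos_left one_pos (by positivity)
  push_cast; linarith

lemma pe_tendsto : Tendsto pe atTop (nhds 0) := by
  unfold pe
  exact tendsto_one_div_add_atTop_nhds_zero_nat

/-- continuous envelope family decreasing to `Real.log` on `[0, ∞)` -/
noncomputable def pf (n : ℕ) (x : ℝ) : ℝ :=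
  max (Real.log (x + pe n) + pe n) (pe n - (n + 1) * x)

lemma pf_strict_anti (n : ℕ) {x : ℝ} (hx : 0 ≤ x) : pf (n + 1) x < pf n x := by
  unfold pf
  apply max_lt_max
  · have h1 : Real.log (x + pe (n + 1)) < Real.log (x + pe n) :=
      Real.log_lt_log (by linarith [pe_pos (n + 1)]) (by linarith [pe_strict_anti n])
    linarith [pe_strict_anti n]
  · have h2 : ((n : ℝ) + 1) * x ≤ ((n : ℝ) + 1 + 1) * x := by nlinarith
    push_cast
    linarith [pe_strict_anti n]

lemma pf_anti {m n : ℕ} (h : m ≤ n) {x : ℝ} (hx : 0 ≤ x) : pf n x ≤ pf m x := by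
  induction n with
  | zero => simp_all
  | succ k ih =>
      rcases Nat.lt_or_ge m (k + 1) with hm | hm
      · exact le_trans (pf_strict_anti k hx).le (ih (Nat.lt_succ_iff.mp hm))
      · have : m = k + 1 := le_antisymm h hm
        subst this; rfl

lemma pf_zero (n : ℕ) : pf n 0 = pe n := by
  unfold pf
  rw [zero_add, mul_zero, sub_zero]
  apply max_eq_right
  have : Real.log (pe n) ≤ 0 := Real.log_nonpos (pe_pos n).le (pe_le_one n)
  linarith

lemma pf_tendsto {x : ℝ} (hx : 0 ≤ x) :
    Tendsto (fun n => pf n x) atTop (nhds (Real.log x)) := by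
  rcases eq_or_lt_of_le hx with h0 | hpos
  · subst h0
    simpa [pf_zero, Real.log_zero] using pe_tendsto
  · -- log part tends to log x
    have hlog : Tendsto (fun n => Real.log (x + pe n) + pe n) atTop (nhds (Real.log x)) := by
      have h1 : Tendsto (fun n => x + pe n) atTop (nhds x) := by
        simpa using (tendsto_const_nhds (x := x)).add pe_tendsto
      have h2 : Tendsto (fun n => Real.log (x + pe n)) atTop (nhds (Real.log x)) :=
        ((Real.continuousAt_log hpos.ne').tendsto.comp h1)
      simpa using h2.add pe_tendsto
    -- eventually the max equals the log part
    have hmul : Tendsto (fun n : ℕ => ((n : ℝ) + 1) * x) atTop atTop := by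
      apply Tendsto.atTop_mul_const hpos
      exact tendsto_atTop_add_const_right _ 1 tendsto_natCast_atTop_atTop
    have hev : ∀ᶠ n in atTop, pf n x = Real.log (x + pe n) + pe n := by
      filter_upwards [hmul.eventually_ge_atTop (1 - Real.log x)] with n hn
      unfold pf
      apply max_eq_left
      have hlb : Real.log x ≤ Real.log (x + pe n) :=
        Real.log_le_log hpos (by linarith [pe_pos n])
      have : pe n - ((n : ℝ) + 1) * x ≤ 1 - ((n : ℝ) + 1) * x := by
        linarith [pe_le_one n]
      linarith [pe_pos n]
    exact Tendsto.congr' (hev.mono fun n h => h.symm) hlog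

lemma pf_continuousOn (n : ℕ) (N : ℝ) : ContinuousOn (pf n) (Set.Icc (0 : ℝ) N) := by
  unfold pf
  refine ContinuousOn.sup (ContinuousOn.add ?_ continuousOn_const) (by fun_prop)
  refine Real.continuousOn_log.comp (Continuous.continuousOn (by fun_prop)) ?_
  intro x hx
  have hp := pe_pos n
  have hpos : (0:ℝ) < x + pe n := by linarith [hx.1]
  simpa using hpos.ne'

/-- rational-coefficient approximation of a real polynomial on `[0, N]` -/
lemma rat_poly_approx (p : ℝ[X]) (N : ℝ) :
    ∀ ε > 0, ∃ q : Polynomial ℚ, ∀ x ∈ Set.Icc (0 : ℝ) N,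
      |((q.map (algebraMap ℚ ℝ)).eval x) - p.eval x| ≤ ε := by
  induction p using Polynomial.induction_on' with
  | add p r hp hr =>
      intro ε hε
      obtain ⟨q1, hq1⟩ := hp (ε / 2) (by positivity)
      obtain ⟨q2, hq2⟩ := hr (ε / 2) (by positivity)
      refine ⟨q1 + q2, fun x hx => ?_⟩
      have h1 := hq1 x hx
      have h2 := hq2 x hx
      rw [Polynomial.map_add, eval_add, eval_add]
      calc |((q1.map (algebraMap ℚ ℝ)).eval x + (q2.map (algebraMap ℚ ℝ)).eval x)
            - (p.eval x + r.eval x)|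
          = |(((q1.map (algebraMap ℚ ℝ)).eval x) - p.eval x)
            + (((q2.map (algebraMap ℚ ℝ)).eval x) - r.eval x)| := by ring_nf
        _ ≤ _ := abs_add_le _ _
        _ ≤ ε / 2 + ε / 2 := add_le_add h1 h2
        _ = ε := by ring
  | monomial k a =>
      intro ε hε
      set M : ℝ := max N 1 with hM
      have hM1 : (1 : ℝ) ≤ M := le_max_right _ _
      have hMk : (0 : ℝ) < M ^ k := by positivity
      obtain ⟨b, hb⟩ := exists_rat_near a (show (0:ℝ) < ε / M ^ k by positivity)
      refine ⟨Polynomial.monomial k b, fun x hx => ?_⟩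
      rw [Polynomial.map_monomial, eval_monomial, eval_monomial]
      have hxk : x ^ k ≤ M ^ k := by
        apply pow_le_pow_left₀ hx.1 (le_trans hx.2 (le_max_left _ _))
      have hxk0 : 0 ≤ x ^ k := pow_nonneg hx.1 k
      have hba : (algebraMap ℚ ℝ) b = (b:ℝ) := eq_ratCast (algebraMap ℚ ℝ) b
      have : |(algebraMap ℚ ℝ) b * x ^ k - a * x ^ k| = |a - (b:ℝ)| * x ^ k := by
        rw [hba, ← sub_mul, abs_mul, abs_of_nonneg hxk0, abs_sub_comm]
      rw [this]
      calc |a - (b:ℝ)| * x ^ k ≤ (ε / M ^ k) * M ^ k :=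
            mul_le_mul hb.le hxk hxk0 (by positivity)
        _ = ε := by field_simp

/-- squeeze a rational polynomial between consecutive envelopes on `[0, N]` -/
lemma key (n : ℕ) (N : ℝ) (hN : 0 ≤ N) :
    ∃ q : Polynomial ℚ, ∀ x ∈ Set.Icc (0 : ℝ) N,
      pf (n + 1) x ≤ (q.map (algebraMap ℚ ℝ)).eval x ∧
      (q.map (algebraMap ℚ ℝ)).eval x ≤ pf n x := by
  have hK : IsCompact (Set.Icc (0 : ℝ) N) := isCompact_Icc
  have hne : (Set.Icc (0 : ℝ) N).Nonempty := Set.nonempty_Icc.mpr hN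
  have hdc : ContinuousOn (fun x => pf n x - pf (n + 1) x) (Set.Icc (0 : ℝ) N) :=
    (pf_continuousOn n N).sub (pf_continuousOn (n + 1) N)
  obtain ⟨x₀, hx₀, hmin'⟩ := hK.exists_isMinOn hne hdc
  have hmin : ∀ x ∈ Set.Icc (0 : ℝ) N, pf n x₀ - pf (n + 1) x₀ ≤ pf n x - pf (n + 1) x :=
    fun x hx => hmin' hx
  set ε : ℝ := pf n x₀ - pf (n + 1) x₀ with hε
  have hεpos : 0 < ε := sub_pos.mpr (pf_strict_anti n hx₀.1)
  have hgap : ∀ x ∈ Set.Icc (0 : ℝ) N, ε ≤ pf n x - pf (n + 1) x := hmin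
  -- target function
  have htc : ContinuousOn (fun x => pf (n + 1) x + ε / 2) (Set.Icc (0 : ℝ) N) :=
    (pf_continuousOn (n + 1) N).add continuousOn_const
  obtain ⟨p, hp⟩ := exists_polynomial_near_of_continuousOn 0 N
    (fun x => pf (n + 1) x + ε / 2) htc (ε / 4) (by positivity)
  obtain ⟨q, hq⟩ := rat_poly_approx p N (ε / 4) (by positivity)
  refine ⟨q, fun x hx => ?_⟩
  have h1 := hp x hx
  have h2 := hq x hx
  have habs : |(q.map (algebraMap ℚ ℝ)).eval x - (pf (n + 1) x + ε / 2)| < ε / 2 := by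
    calc |(q.map (algebraMap ℚ ℝ)).eval x - (pf (n + 1) x + ε / 2)|
        ≤ |(q.map (algebraMap ℚ ℝ)).eval x - p.eval x|
          + |p.eval x - (pf (n + 1) x + ε / 2)| := abs_sub_le _ _ _
      _ < ε / 4 + ε / 4 := add_lt_add_of_le_of_lt h2 h1
      _ = ε / 2 := by ring
  rw [abs_lt] at habs
  constructor
  · linarith
  · linarith [hgap x hx]

/-- There is a doubly-indexed family of rational polynomials `g n N` converging pointwise
(as `n → ∞`) to `ln₊ = Real.log` on each `[0, N]`, monotonically decreasing in `n`,
consistently across the interval parameters. -/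
theorem exists_rat_poly_approx_log :
    ∃ g : ℕ → ℕ → Polynomial ℚ,
      (∀ N : ℕ, ∀ x ∈ Set.Icc (0 : ℝ) (N : ℝ),
        Tendsto (fun n : ℕ => ((g n N).map (algebraMap ℚ ℝ)).eval x) atTop
          (nhds (Real.log x))) ∧
      (∀ n N N' : ℕ, ∀ x ∈ Set.Icc (0 : ℝ) (min (N : ℝ) (N' : ℝ)),
        ((g (n + 1) N').map (algebraMap ℚ ℝ)).eval x ≤
          ((g n N).map (algebraMap ℚ ℝ)).eval x) := by
  choose g hg using fun (n N : ℕ) => key n (N : ℝ) (Nat.cast_nonneg N)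
  refine ⟨g, ?_, ?_⟩
  · intro N x hx
    have hlow : Tendsto (fun n : ℕ => pf (n + 1) x) atTop (nhds (Real.log x)) :=
      (pf_tendsto hx.1).comp (tendsto_add_atTop_nat 1)
    have hhigh : Tendsto (fun n : ℕ => pf n x) atTop (nhds (Real.log x)) :=
      pf_tendsto hx.1
    exact tendsto_of_tendsto_of_tendsto_of_le_of_le hlow hhigh
      (fun n => (hg n N x hx).1) (fun n => (hg n N x hx).2)
  · intro n N N' x hx
    have hxN : x ∈ Set.Icc (0 : ℝ) (N : ℝ) :=
      ⟨hx.1, hx.2.trans (min_le_left _ _)⟩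
    have hxN' : x ∈ Set.Icc (0 : ℝ) (N' : ℝ) :=
      ⟨hx.1, hx.2.trans (min_le_right _ _)⟩
    calc ((g (n + 1) N').map (algebraMap ℚ ℝ)).eval x
        ≤ pf (n + 1) x := (hg (n + 1) N' x hxN').2
      _ ≤ ((g n N).map (algebraMap ℚ ℝ)).eval x := (hg n N x hxN).1
end

section
/- For every real t ≥ 0, the sequence a_n(t) := t * max (−(n : ℝ)) (Real.log t / t + (2 : ℝ)⁻¹ ^ n) is antitone in n (a_{n+1}(t) ≤ a_n(t) for all n) and converges to Real.log t as n → ∞. (Here at t = 0 every term equals 0 = Real.log 0, using the conventions Real.log 0 = 0 and division by 0 equals 0.) -/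
open Filter

/-- The sequence `a n = t * max (-n) (log t / t + (1/2)^n)` is antitone in `n` and converges
to `Real.log t` for every `t ≥ 0` (at `t = 0` every term is `0 = Real.log 0`). -/
theorem antitone_tendsto_log_approx (t : ℝ) (ht : 0 ≤ t) :
    Antitone (fun n : ℕ => t * max (-(n : ℝ)) (Real.log t / t + (2 : ℝ)⁻¹ ^ n)) ∧
    Tendsto (fun n : ℕ => t * max (-(n : ℝ)) (Real.log t / t + (2 : ℝ)⁻¹ ^ n)) atTop
      (nhds (Real.log t)) := by
  constructor
  · intro m n hmn
    simp only
    apply mul_le_mul_of_nonneg_left _ ht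
    apply max_le_max
    · simp [Nat.cast_le.mpr hmn]
    · have : (2 : ℝ)⁻¹ ^ n ≤ (2 : ℝ)⁻¹ ^ m :=
        pow_le_pow_of_le_one (by norm_num) (by norm_num) hmn
      linarith
  · rcases eq_or_lt_of_le ht with h0 | h0
    · simp [← h0, Real.log_zero]
    · have hev : ∀ᶠ n : ℕ in atTop,
          t * max (-(n : ℝ)) (Real.log t / t + (2 : ℝ)⁻¹ ^ n)
            = t * (Real.log t / t + (2 : ℝ)⁻¹ ^ n) := by
        obtain ⟨N, hN⟩ := exists_nat_ge (-(Real.log t / t))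
        filter_upwards [eventually_ge_atTop N] with n hn
        have hle : -(n : ℝ) ≤ Real.log t / t := by
          have : (N : ℝ) ≤ n := Nat.cast_le.mpr hn
          linarith
        rw [max_eq_right]
        have : (0 : ℝ) < (2 : ℝ)⁻¹ ^ n := by positivity
        linarith
      apply Tendsto.congr' (Filter.EventuallyEq.symm hev)
      have : Tendsto (fun n : ℕ => t * (Real.log t / t + (2 : ℝ)⁻¹ ^ n)) atTop
          (nhds (t * (Real.log t / t + 0))) := by
        apply Tendsto.const_mul
        exact tendsto_const_nhds.add (tendsto_pow_atTop_nhds_zero_of_lt_one (by norm_num) (by norm_num))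
      simpa [mul_div_cancel₀ _ h0.ne', mul_add] using this
end
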